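/- arXiv:1502.04852 — 3 statements merged into one kernel-verified Lean document; each statement's English description precedes it below -/
import Mathlib

section
/- Let F₂ be the free group of rank 2. An element w of F₂ binds F₂ if and only if w is not a power of a primitive element of F₂, i.e., there do not exist a primitive element p of F₂ and an integer n with w = pⁿ. -/
open scoped Monoid.Coprod

/-- `G` is the internal free product of its subgroups `G₁` and `G₂` if the natural
homomorphism from the abstract free product `G₁ ∗ G₂` to `G` induced by the inclusion
maps is an isomorphism (equivalently, bijective). -/
def IsInternalFreeProduct {G : Type*} [Group G] (G₁ G₂ : Subgroup G) : Prop :=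
  Function.Bijective (Monoid.Coprod.lift G₁.subtype G₂.subtype)

/-- `G₁` is a proper free factor of `G` if there is a nontrivial subgroup `G₂` of `G`
such that `G` is the internal free product of `G₁` and `G₂`. -/
def IsProperFreeFactor {G : Type*} [Group G] (G₁ : Subgroup G) : Prop :=
  ∃ G₂ : Subgroup G, G₂ ≠ ⊥ ∧ IsInternalFreeProduct G₁ G₂

/-- An element `x` of `G` binds `G` if `x` is not contained in any proper free factor of `G`. -/
def Binds {G : Type*} [Group G] (x : G) : Prop :=
  ∀ G₁ : Subgroup G, IsProperFreeFactor G₁ → x ∉ G₁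

/-- A subset `S` of a group `G` is a free basis of `G` if the homomorphism from the
free group on `S` to `G` induced by the inclusion is an isomorphism (equivalently, bijective),
i.e. `S` freely generates `G`. -/
def IsFreeBasis {G : Type*} [Group G] (S : Set G) : Prop :=
  Function.Bijective (FreeGroup.lift (Subtype.val : S → G))

/-- An element of a free group is primitive if it is a member of some free basis. -/
def IsPrimitive {G : Type*} [Group G] (p : G) : Prop :=
  ∃ S : Set G, IsFreeBasis S ∧ p ∈ S

/-!
If `p` lies in a free basis `S`, then `G = ⟨p⟩ ∗ ⟨S \ {p}⟩`, so all powers of `p` lie in a proper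
free factor as soon as `S` has a second element, which is the case in rank two. Conversely, let
`w ∈ G₁` where `F₂ = G₁ ∗ G₂` with `G₂ ≠ 1`. By Nielsen–Schreier both factors are free, and bases of
the factors together form a basis of `F₂`. Since the rank of a free group is an invariant, `G₁` has
rank at most one, so `G₁` is trivial or generated by a primitive element of `F₂`.
-/

theorem isInternalFreeProduct_of_mulEquiv {G M N : Type*} [Group G] [Group M] [Group N]
    (e : M ∗ N ≃* G) :
    IsInternalFreeProduct (e.toMonoidHom.comp Monoid.Coprod.inl).range
      (e.toMonoidHom.comp Monoid.Coprod.inr).range := by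
  let e₁ := MonoidHom.ofInjective (f := e.toMonoidHom.comp Monoid.Coprod.inl)
    (e.injective.comp Monoid.Coprod.inl_injective)
  let e₂ := MonoidHom.ofInjective (f := e.toMonoidHom.comp Monoid.Coprod.inr)
    (e.injective.comp Monoid.Coprod.inr_injective)
  have h : (Monoid.Coprod.lift (Subgroup.subtype _) (Subgroup.subtype _)).comp
      (MulEquiv.coprodCongr e₁ e₂).toMonoidHom = e.toMonoidHom := by
    ext x <;> rfl
  rw [IsInternalFreeProduct,
    ← Function.Bijective.of_comp_iff _ (MulEquiv.coprodCongr e₁ e₂).bijective]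
  convert e.bijective using 1
  exact congrArg DFunLike.coe h

namespace FreeGroupBasis

variable {ι ι' X Y G M N : Type*} [Group G] [Group M] [Group N]

noncomputable def coprod (b₁ : FreeGroupBasis X M) (b₂ : FreeGroupBasis Y N) :
    FreeGroupBasis (X ⊕ Y) (M ∗ N) :=
  .ofRepr <| MulEquiv.symm <| MonoidHom.toMulEquiv
    (FreeGroup.lift (Sum.elim (Monoid.Coprod.inl ∘ b₁) (Monoid.Coprod.inr ∘ b₂)))
    (Monoid.Coprod.lift (b₁.lift (FreeGroup.of ∘ Sum.inl)) (b₂.lift (FreeGroup.of ∘ Sum.inr)))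
    (FreeGroup.ext_hom _ _ fun | .inl x => by simp | .inr y => by simp)
    (by
      ext1
      · exact b₁.ext_hom _ _ fun x => by simp
      · exact b₂.ext_hom _ _ fun y => by simp)

@[simp]
theorem coprod_apply_inl (b₁ : FreeGroupBasis X M) (b₂ : FreeGroupBasis Y N) (x : X) :
    b₁.coprod b₂ (.inl x) = Monoid.Coprod.inl (b₁ x) :=
  (b₁.coprod b₂).repr.injective <| by rw [repr_apply_coe]; simp [coprod]

@[simp]
theorem coprod_apply_inr (b₁ : FreeGroupBasis X M) (b₂ : FreeGroupBasis Y N) (y : Y) :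
    b₁.coprod b₂ (.inr y) = Monoid.Coprod.inr (b₂ y) :=
  (b₁.coprod b₂).repr.injective <| by rw [repr_apply_coe]; simp [coprod]

theorem lift_eq_repr_symm (b : FreeGroupBasis ι G) :
    FreeGroup.lift ⇑b = b.repr.symm.toMonoidHom :=
  FreeGroup.ext_hom _ _ fun _ => FreeGroup.lift_apply_of

theorem apply_ne_one (b : FreeGroupBasis ι G) (i : ι) : b i ≠ 1 := fun h =>
  FreeGroup.of_ne_one i (by rw [← b.repr_apply_coe, h, map_one])

theorem isEmpty_iff_subsingleton (b : FreeGroupBasis ι G) : IsEmpty ι ↔ Subsingleton G :=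
  ⟨fun _ => b.repr.injective.subsingleton,
    fun _ => ⟨fun i => b.apply_ne_one i (Subsingleton.elim _ _)⟩⟩

theorem closure_range (b : FreeGroupBasis ι G) : Subgroup.closure (Set.range b) = ⊤ := by
  rw [← FreeGroup.range_lift_eq_closure, lift_eq_repr_symm, MonoidHom.range_eq_top]
  exact b.repr.symm.surjective

theorem exists_eq_zpow_of_subsingleton [Subsingleton ι] (b : FreeGroupBasis ι G) (i : ι)
    (g : G) : ∃ n : ℤ, g = b i ^ n := by
  have hle : Subgroup.closure (Set.range b) ≤ Subgroup.zpowers (b i) := by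
    rw [Subgroup.zpowers_eq_closure]
    exact Subgroup.closure_mono (Set.range_subset_iff.mpr fun j => by simp [Subsingleton.elim j i])
  obtain ⟨n, hn⟩ := Subgroup.mem_zpowers_iff.mp (hle (b.closure_range ▸ Subgroup.mem_top g))
  exact ⟨n, hn.symm⟩

noncomputable def indexEquiv (b : FreeGroupBasis ι G) (b' : FreeGroupBasis ι' G) : ι ≃ ι' :=
  .ofFreeGroupEquiv (b.repr.symm.trans b'.repr)

theorem isInternalFreeProduct_closure (b : FreeGroupBasis (X ⊕ Y) G) :
    IsInternalFreeProduct (Subgroup.closure (Set.range (b ∘ Sum.inl)))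
      (Subgroup.closure (Set.range (b ∘ Sum.inr))) := by
  let c := (ofFreeGroup X).coprod (ofFreeGroup Y)
  let e := c.repr.trans b.repr.symm
  have h₁ : e.toMonoidHom.comp Monoid.Coprod.inl = FreeGroup.lift (b ∘ Sum.inl) :=
    FreeGroup.ext_hom _ _ fun x => by
      change b.repr.symm (c.repr (Monoid.Coprod.inl (ofFreeGroup X x))) = _
      rw [← coprod_apply_inl _ (ofFreeGroup Y), repr_apply_coe, FreeGroup.lift_apply_of]
      rfl
  have h₂ : e.toMonoidHom.comp Monoid.Coprod.inr = FreeGroup.lift (b ∘ Sum.inr) :=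
    FreeGroup.ext_hom _ _ fun y => by
      change b.repr.symm (c.repr (Monoid.Coprod.inr (ofFreeGroup Y y))) = _
      rw [← coprod_apply_inr (ofFreeGroup X), repr_apply_coe, FreeGroup.lift_apply_of]
      rfl
  simpa only [h₁, h₂, FreeGroup.range_lift_eq_closure] using isInternalFreeProduct_of_mulEquiv e

theorem isFreeBasis_range (b : FreeGroupBasis ι G) : IsFreeBasis (Set.range b) := by
  let b' := b.reindex (Equiv.ofInjective b b.injective)
  have hb' : ⇑b' = Subtype.val := funext fun s => Equiv.apply_ofInjective_symm b.injective s
  rw [IsFreeBasis, ← hb', lift_eq_repr_symm]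
  exact b'.repr.symm.bijective

theorem isPrimitive (b : FreeGroupBasis ι G) (i : ι) : IsPrimitive (b i) :=
  ⟨_, b.isFreeBasis_range, i, rfl⟩

end FreeGroupBasis

namespace IsFreeBasis

variable {ι G : Type*} [Group G] {S : Set G} {p q : G}

noncomputable def basis (hS : IsFreeBasis S) : FreeGroupBasis S G :=
  .ofRepr (MulEquiv.ofBijective _ hS).symm

@[simp]
theorem basis_apply (hS : IsFreeBasis S) (s : S) : hS.basis s = s :=
  FreeGroup.lift_apply_of

theorem nontrivial (b₀ : FreeGroupBasis ι G) [Nontrivial ι] (hS : IsFreeBasis S) :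
    S.Nontrivial :=
  Set.nontrivial_coe_sort.mp (hS.basis.indexEquiv b₀).nontrivial

theorem isProperFreeFactor_zpowers (hS : IsFreeBasis S) (hp : p ∈ S) (hq : q ∈ S)
    (hqp : q ≠ p) : IsProperFreeFactor (Subgroup.zpowers p) := by
  classical
  let b := hS.basis.reindex (Equiv.sumCompl (· = (⟨p, hp⟩ : S))).symm
  have hrange : Set.range (b ∘ Sum.inl) = {p} := by
    ext; simp [b, eq_comm]
  have h := b.isInternalFreeProduct_closure
  rw [hrange, ← Subgroup.zpowers_eq_closure] at h
  refine ⟨_, fun hbot => ?_, h⟩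
  have hq' : (⟨q, hq⟩ : S) ≠ ⟨p, hp⟩ := fun h => hqp (congrArg Subtype.val h)
  exact b.apply_ne_one (.inr ⟨_, hq'⟩)
    (Subgroup.closure_eq_bot_iff.mp hbot (Set.mem_range_self (f := b ∘ Sum.inr) _))

theorem not_binds_zpow (hS : IsFreeBasis S) (hS₂ : S.Nontrivial) (hp : p ∈ S) (n : ℤ) :
    ¬ Binds (p ^ n) := fun h =>
  let ⟨_, hq, hqp⟩ := hS₂.exists_ne p
  h _ (hS.isProperFreeFactor_zpowers hp hq hqp) (Subgroup.zpow_mem_zpowers p n)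

end IsFreeBasis

theorem IsPrimitive.not_binds_zpow {ι G : Type*} [Group G] (b₀ : FreeGroupBasis ι G)
    [Nontrivial ι] {p : G} (hp : IsPrimitive p) (n : ℤ) : ¬ Binds (p ^ n) :=
  let ⟨_, hS, hpS⟩ := hp
  hS.not_binds_zpow (hS.nontrivial b₀) hpS n

theorem subsingleton_of_sum_equiv_fin_two {α β : Type*} [Nonempty β] (e : α ⊕ β ≃ Fin 2) :
    Subsingleton α := by
  have : Finite (α ⊕ β) := .of_equiv _ e.symm
  have : Finite α := .of_injective (Sum.inl : α → α ⊕ β) Sum.inl_injective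
  have : Finite β := .of_injective (Sum.inr : β → α ⊕ β) Sum.inr_injective
  have hcard := Nat.card_congr e
  rw [Nat.card_sum, Nat.card_fin] at hcard
  have := Finite.card_pos (α := β)
  exact Finite.card_le_one_iff_subsingleton.mp (by omega)

open IsFreeGroup in
theorem IsProperFreeFactor.exists_isPrimitive_zpow_eq {G : Type*} [Group G]
    (b₀ : FreeGroupBasis (Fin 2) G) {G₁ : Subgroup G} (hG₁ : IsProperFreeFactor G₁) {w : G}
    (hw : w ∈ G₁) : ∃ (p : G) (n : ℤ), IsPrimitive p ∧ w = p ^ n := by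
  obtain ⟨G₂, hG₂, hbij⟩ := hG₁
  have := b₀.isFreeGroup
  -- `basis G₁` and `basis G₂` exist by Nielsen–Schreier (`subgroupIsFreeOfIsFree`).
  let B := ((basis G₁).coprod (basis G₂)).map (MulEquiv.ofBijective _ hbij)
  have : Nonempty (Generators G₂) := by
    rwa [← not_isEmpty_iff, (basis G₂).isEmpty_iff_subsingleton, not_subsingleton_iff_nontrivial,
      Subgroup.nontrivial_iff_ne_bot]
  have : Subsingleton (Generators G₁) := subsingleton_of_sum_equiv_fin_two (B.indexEquiv b₀)
  rcases isEmpty_or_nonempty (Generators G₁) with h | ⟨⟨x⟩⟩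
  · have : Subsingleton G₁ := (basis G₁).isEmpty_iff_subsingleton.mp h
    refine ⟨b₀ 0, 0, b₀.isPrimitive 0, ?_⟩
    simpa using congrArg Subtype.val (Subsingleton.elim (⟨w, hw⟩ : G₁) 1)
  · obtain ⟨n, hn⟩ := (basis G₁).exists_eq_zpow_of_subsingleton x ⟨w, hw⟩
    have hBx : B (.inl x) = basis G₁ x := by
      simp only [B, FreeGroupBasis.map_apply, FreeGroupBasis.coprod_apply_inl]
      exact Monoid.Coprod.lift_apply_inl G₁.subtype G₂.subtype _
    exact ⟨B (.inl x), n, B.isPrimitive _, by simpa [hBx] using congrArg Subtype.val hn⟩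

/-- An element `w` of the free group of rank 2 binds it if and only if `w` is not a power of
a primitive element. -/
theorem binds_freeGroup_two_iff (w : FreeGroup (Fin 2)) :
    Binds w ↔ ¬ ∃ (p : FreeGroup (Fin 2)) (n : ℤ), IsPrimitive p ∧ w = p ^ n := by
  constructor
  · rintro hw ⟨p, n, hp, rfl⟩
    exact hp.not_binds_zpow (.ofFreeGroup (Fin 2)) n hw
  · rintro h G₁ hG₁ hw
    exact h (hG₁.exists_isPrimitive_zpow_eq (.ofFreeGroup (Fin 2)) hw)
end

section
/- In the free group F₂ with free basis {x₁, x₂}, the element x₁x₂x₁x₂³ binds F₂. -/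
open scoped Monoid.Coprod

set_option maxRecDepth 10000


/-- certificate permutation a = (4 5) in S₆ -/
def permA : Equiv.Perm (Fin 6) := Equiv.swap 4 5

/-- certificate permutation b = (0 1 2 3 4) in S₆ -/
def permB : Equiv.Perm (Fin 6) :=
  ⟨![1,2,3,4,0,5], ![4,0,1,2,3,5], by decide, by decide⟩

theorem perm_not_sq : ∀ q : Equiv.Perm (Fin 6), q ^ 2 ≠ permA * permB * permA * permB ^ 3 := by
  decide

/-- `w = x₁x₂x₁x₂³` is not a square in the free group. -/
theorem w_not_square (c : FreeGroup (Fin 2)) :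
    c ^ 2 ≠ FreeGroup.of (0 : Fin 2) * FreeGroup.of (1 : Fin 2) *
      FreeGroup.of (0 : Fin 2) * (FreeGroup.of (1 : Fin 2)) ^ 3 := by
  intro h
  have h2 : (1 : Fin 2) ≠ 0 := by decide
  apply perm_not_sq (FreeGroup.lift (fun i : Fin 2 => if i = 0 then permA else permB) c)
  have := congrArg (FreeGroup.lift (fun i : Fin 2 => if i = 0 then permA else permB)) h
  simpa [map_mul, map_pow, FreeGroup.lift_apply_of, h2] using this

/-- In a free group, the closure of the range of the canonical generators is everything. -/
lemma IsFreeGroup.closure_range_of (G : Type*) [Group G] [IsFreeGroup G] :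
    Subgroup.closure (Set.range (IsFreeGroup.of : IsFreeGroup.Generators G → G)) = ⊤ := by
  have h1 : Set.range (IsFreeGroup.of : IsFreeGroup.Generators G → G)
      = (IsFreeGroup.mulEquiv G) '' Set.range (FreeGroup.of) := by
    rw [← Set.range_comp]; rfl
  rw [h1, ← MulEquiv.coe_toMonoidHom, ← MonoidHom.map_closure, FreeGroup.closure_range_of,
    ← MonoidHom.range_eq_map, MonoidHom.range_eq_top_of_surjective]
  exact (IsFreeGroup.mulEquiv G).surjective

/-- A free group with an empty generating set is trivial. -/
lemma subsingleton_of_isEmpty_generators (G : Type*) [Group G] [IsFreeGroup G]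
    [IsEmpty (IsFreeGroup.Generators G)] : Subsingleton G := by
  have h := IsFreeGroup.closure_range_of G
  rw [Set.range_eq_empty, Subgroup.closure_empty] at h
  constructor
  intro a b
  have ha : a ∈ (⊥ : Subgroup G) := h ▸ Subgroup.mem_top a
  have hb : b ∈ (⊥ : Subgroup G) := h ▸ Subgroup.mem_top b
  rw [Subgroup.mem_bot] at ha hb
  rw [ha, hb]

/-- A free group with a one-element generating set: every element is a power of the generator. -/
lemma exists_zpow_of_subsingleton_generators (G : Type*) [Group G] [IsFreeGroup G]
    [Subsingleton (IsFreeGroup.Generators G)] (a₀ : IsFreeGroup.Generators G) (g : G) :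
    ∃ k : ℤ, (IsFreeGroup.of a₀) ^ k = g := by
  have h := IsFreeGroup.closure_range_of G
  have h1 : Set.range (IsFreeGroup.of : IsFreeGroup.Generators G → G)
      = {IsFreeGroup.of a₀} := by
    apply Set.eq_singleton_iff_unique_mem.2
    exact ⟨Set.mem_range_self _, by rintro _ ⟨b, rfl⟩; rw [Subsingleton.elim b a₀]⟩
  rw [h1] at h
  exact Subgroup.mem_closure_singleton.1 (h ▸ Subgroup.mem_top g)

/-- Composition with a `MulEquiv` as an equivalence of hom-sets. -/
def homCompEquiv {M N : Type*} [Monoid M] [Monoid N] (e : M ≃* N) (Q : Type*) [Monoid Q] :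
    (M →* Q) ≃ (N →* Q) where
  toFun f := f.comp e.symm.toMonoidHom
  invFun f := f.comp e.toMonoidHom
  left_inv f := by ext x; simp
  right_inv f := by ext x; simp

/-- In the free group with free basis `{x₁, x₂}`, the element `x₁x₂x₁x₂³` binds it. -/
theorem binds_x₁x₂x₁x₂cubed :
    Binds (FreeGroup.of (0 : Fin 2) * FreeGroup.of (1 : Fin 2) *
      FreeGroup.of (0 : Fin 2) * (FreeGroup.of (1 : Fin 2)) ^ 3) := by
  classical
  rintro G₁ ⟨G₂, hG₂, hbij⟩ hw
  set w : FreeGroup (Fin 2) := FreeGroup.of (0 : Fin 2) * FreeGroup.of (1 : Fin 2) *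
      FreeGroup.of (0 : Fin 2) * (FreeGroup.of (1 : Fin 2)) ^ 3 with hwdef
  have h10 : (1 : Fin 2) ≠ 0 := by decide
  let e : (↥G₁ ∗ ↥G₂) ≃* FreeGroup (Fin 2) :=
    MulEquiv.ofBijective (Monoid.Coprod.lift G₁.subtype G₂.subtype) hbij
  have he : ∀ x : ↥G₁, e (Monoid.Coprod.inl x) = (x : FreeGroup (Fin 2)) := fun x => rfl
  -- the abelianization-type homomorphism to ℤ × ℤ
  let φ : FreeGroup (Fin 2) →* Multiplicative (ℤ × ℤ) :=
    FreeGroup.lift (fun i : Fin 2 =>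
      Multiplicative.ofAdd (if i = 0 then ((1:ℤ), (0:ℤ)) else ((0:ℤ), (1:ℤ))))
  have hφw : φ w = Multiplicative.ofAdd ((2:ℤ), (4:ℤ)) := by
    have hof0 : φ (FreeGroup.of 0) = Multiplicative.ofAdd ((1:ℤ), (0:ℤ)) := by
      simp [φ, FreeGroup.lift_apply_of]
    have hof1 : φ (FreeGroup.of 1) = Multiplicative.ofAdd ((0:ℤ), (1:ℤ)) := by
      simp [φ, FreeGroup.lift_apply_of, h10]
    rw [hwdef, map_mul, map_mul, map_mul, map_pow, hof0, hof1, ← ofAdd_nsmul,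
      ← ofAdd_add, ← ofAdd_add, ← ofAdd_add]
    congr 1
  -- the generators of G₂ are nonempty
  have hS₂ : Nonempty (IsFreeGroup.Generators ↥G₂) := by
    by_contra hne
    rw [not_nonempty_iff] at hne
    have hsub := subsingleton_of_isEmpty_generators ↥G₂
    apply hG₂
    rw [Subgroup.eq_bot_iff_forall]
    intro x hx
    have : (⟨x, hx⟩ : ↥G₂) = ⟨1, G₂.one_mem⟩ := Subsingleton.elim _ _
    exact congrArg Subtype.val this
  obtain ⟨d⟩ := hS₂
  -- the generators of G₁ form a subsingleton
  have hS₁ : Subsingleton (IsFreeGroup.Generators ↥G₁) := by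
    by_contra hns
    rw [not_subsingleton_iff_nontrivial] at hns
    obtain ⟨a, b, hab⟩ := hns.exists_pair_ne
    let Q := Multiplicative (ZMod 2)
    let E : ((IsFreeGroup.Generators ↥G₁ → Q) × (IsFreeGroup.Generators ↥G₂ → Q)) ≃
        (Fin 2 → Q) :=
      (Equiv.prodCongr IsFreeGroup.lift IsFreeGroup.lift).trans
        (Monoid.Coprod.liftEquiv.trans ((homCompEquiv e Q).trans FreeGroup.lift.symm))
    let J : (Q × Q × Q) →
        ((IsFreeGroup.Generators ↥G₁ → Q) × (IsFreeGroup.Generators ↥G₂ → Q)) :=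
      fun p => (fun t => if t = a then p.1 else p.2.1, fun t => if t = d then p.2.2 else 1)
    have hJ : Function.Injective J := by
      intro p q hpq
      have h1 := congrFun (congrArg Prod.fst hpq) a
      have h2 := congrFun (congrArg Prod.fst hpq) b
      have h3 := congrFun (congrArg Prod.snd hpq) d
      simp only [J, if_pos rfl, if_neg (Ne.symm hab)] at h1 h2 h3
      exact Prod.ext h1 (Prod.ext h2 h3)
    have hcard : Fintype.card (Q × Q × Q) ≤ Fintype.card (Fin 2 → Q) :=
      Fintype.card_le_of_injective (E ∘ J) (E.injective.comp hJ)
    simp only [Q, Fintype.card_prod, Fintype.card_fun, Fintype.card_fin] at hcard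
    norm_num [Fintype.card_multiplicative, ZMod.card] at hcard
  -- case: G₁ trivial
  rcases isEmpty_or_nonempty (IsFreeGroup.Generators ↥G₁) with hE | ⟨⟨a₀⟩⟩
  · have hsub := subsingleton_of_isEmpty_generators ↥G₁
    have : (⟨w, hw⟩ : ↥G₁) = ⟨1, G₁.one_mem⟩ := Subsingleton.elim _ _
    have hw1 : w = 1 := congrArg Subtype.val this
    rw [hw1, map_one] at hφw
    have := congrArg Multiplicative.toAdd hφw
    simp only [toAdd_one, toAdd_ofAdd] at this
    simpa using congrArg Prod.fst this
  -- case: G₁ cyclic, generated by s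
  · let s : ↥G₁ := IsFreeGroup.of a₀
    obtain ⟨k, hsk⟩ := exists_zpow_of_subsingleton_generators ↥G₁ a₀ ⟨w, hw⟩
    have hwk : w = (s : FreeGroup (Fin 2)) ^ k := by
      have := congrArg (G₁.subtype) hsk
      simpa using this.symm
    -- parity: k is even
    let h₁ : ↥G₁ →* Multiplicative (ZMod 2) :=
      IsFreeGroup.lift (fun _ => Multiplicative.ofAdd 1)
    let ψ : FreeGroup (Fin 2) →* Multiplicative (ZMod 2) :=
      (Monoid.Coprod.lift h₁ 1).comp e.symm.toMonoidHom
    have hψG₁ : ∀ x : ↥G₁, ψ (x : FreeGroup (Fin 2)) = h₁ x := by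
      intro x
      have h1 : e.symm (x : FreeGroup (Fin 2)) = Monoid.Coprod.inl x := by
        rw [MulEquiv.symm_apply_eq]; exact he x
      simp only [ψ, MonoidHom.comp_apply, MulEquiv.coe_toMonoidHom, h1,
        Monoid.Coprod.lift_apply_inl]
    have habel : ∀ A B : Multiplicative (ZMod 2), A * B * A * B ^ 3 = 1 := by decide
    have hψw : ψ w = 1 := by
      rw [hwdef]
      simp only [map_mul, map_pow]
      exact habel _ _
    have hψw' : ψ w = Multiplicative.ofAdd ((k : ZMod 2)) := by
      have h1 : ψ w = h₁ ((⟨w, hw⟩ : ↥G₁)) := hψG₁ ⟨w, hw⟩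
      rw [h1, ← hsk, map_zpow]
      have h2 : h₁ s = Multiplicative.ofAdd 1 := IsFreeGroup.lift_of _ _
      rw [h2, ← ofAdd_zsmul]
      congr 1
      rw [zsmul_eq_mul, mul_one]
    have hk2 : (2:ℤ) ∣ k := by
      rw [hψw'] at hψw
      have h0 : ((k : ℤ) : ZMod 2) = 0 := by simpa using hψw
      exact_mod_cast (ZMod.intCast_zmod_eq_zero_iff_dvd k 2).1 h0
    -- φ gives k • v = (2,4), so k = ±2
    have hφs := congrArg φ hwk
    rw [hφw, map_zpow] at hφs
    have hkv : k • (Multiplicative.toAdd (φ (s : FreeGroup (Fin 2)))) = ((2:ℤ), (4:ℤ)) := by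
      have := congrArg Multiplicative.toAdd hφs
      simpa [toAdd_zpow] using this.symm
    have hfst : k * (Multiplicative.toAdd (φ (s : FreeGroup (Fin 2)))).1 = 2 := by
      have := congrArg Prod.fst hkv
      simpa [zsmul_eq_mul] using this
    have hkdvd : k ∣ 2 := ⟨_, hfst.symm⟩
    have hkval : k = 2 ∨ k = -2 := by
      have ha : k.natAbs ∣ 2 := by
        have := Int.natAbs_dvd_natAbs.2 hkdvd
        simpa using this
      have hb : 2 ∣ k.natAbs := by
        have := Int.natAbs_dvd_natAbs.2 hk2
        simpa using this
      have : k.natAbs = 2 := Nat.dvd_antisymm ha hb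
      omega
    rcases hkval with rfl | rfl
    · exact w_not_square (s : FreeGroup (Fin 2)) (by rw [← hwdef, hwk]; group)
    · refine w_not_square ((s : FreeGroup (Fin 2)))⁻¹ ?_
      rw [← hwdef, hwk]
      group
end

section
/- Let F be a free group of finite rank g, and suppose F is the internal free product of subgroups G₁ and G₂ (i.e., the natural homomorphism from the abstract free product G₁ ∗ G₂ to F induced by the inclusions is an isomorphism). Then there exist a free basis {y₁, y₂, …, y_g} of F and an integer g₁ with 0 ≤ g₁ ≤ g such that {y₁, …, y_{g₁}} is a free basis of G₁ and {y_{g₁+1}, …, y_g} is a free basis of G₂. -/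
open scoped Monoid.Coprod

/-- A subset `S` of a subgroup `H` of `G` is a free basis of `H` if `S ⊆ H` and the
homomorphism from the free group on `S` to `H` induced by the inclusion is an isomorphism
(equivalently, bijective). -/
def IsFreeBasisOfSubgroup {G : Type*} [Group G] (S : Set G) (H : Subgroup G) : Prop :=
  ∃ hS : S ⊆ (H : Set G),
    Function.Bijective (FreeGroup.lift (fun s : S => (⟨s.1, hS s.2⟩ : H)))

/-!
By Nielsen–Schreier, `G₁` and `G₂` are free. Since
`FreeGroup (ι₁ ⊕ ι₂) ≃* FreeGroup ι₁ ∗ FreeGroup ι₂`, bases of `G₁` and `G₂` together form a basis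
of `G₁ ∗ G₂ ≃* F`; invariance of rank gives `|ι₁| + |ι₂| = g`, so listing the basis of `G₁` first
and that of `G₂` second is a basis of `F` indexed by `Fin g` with the required shape.
-/

open Function

def FreeGroup.sumMulEquivCoprod (α β : Type*) : FreeGroup (α ⊕ β) ≃* FreeGroup α ∗ FreeGroup β :=
  MonoidHom.toMulEquiv
    (FreeGroup.lift <|
      Sum.elim (Monoid.Coprod.inl ∘ FreeGroup.of) (Monoid.Coprod.inr ∘ FreeGroup.of))
    (Monoid.Coprod.lift (FreeGroup.map Sum.inl) (FreeGroup.map Sum.inr))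
    (by ext (a | b) <;> rfl)
    (by apply Monoid.Coprod.hom_ext <;> ext <;> rfl)

namespace FreeGroupBasis

variable {ι G : Type*} [Group G]

theorem bijective_lift (b : FreeGroupBasis ι G) : Bijective (FreeGroup.lift b) := by
  have : FreeGroup.lift b = b.repr.symm.toMonoidHom :=
    FreeGroup.ext_hom _ _ fun _ => FreeGroup.lift_apply_of ..
  exact this ▸ b.repr.symm.bijective

theorem isFreeBasisOfSubgroup_range {H : Subgroup G} (b : FreeGroupBasis ι H) :
    IsFreeBasisOfSubgroup (Set.range fun i => (b i : G)) H := by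
  refine ⟨Set.range_subset_iff.2 fun i => (b i).2, ?_⟩
  let e := Equiv.ofInjective (fun i => (b i : G)) (Subtype.val_injective.comp b.injective)
  convert (b.reindex e).bijective_lift using 3
  funext s
  exact Subtype.ext (congrArg Subtype.val (e.apply_symm_apply s)).symm

theorem image_reindex_finSumFinEquiv_lt {m n : ℕ} (b : FreeGroupBasis (Fin m ⊕ Fin n) G) :
    b.reindex finSumFinEquiv '' {i | (i : ℕ) < m} = Set.range (b ∘ Sum.inl) := by
  have : finSumFinEquiv.symm '' {i : Fin (m + n) | (i : ℕ) < m} = Set.range Sum.inl := by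
    rw [Equiv.image_symm_eq_preimage]
    ext (i | i) <;> simp
  rw [Set.range_comp, ← this, ← Set.image_comp]
  rfl

theorem image_reindex_finSumFinEquiv_ge {m n : ℕ} (b : FreeGroupBasis (Fin m ⊕ Fin n) G) :
    b.reindex finSumFinEquiv '' {i | m ≤ (i : ℕ)} = Set.range (b ∘ Sum.inr) := by
  have : finSumFinEquiv.symm '' {i : Fin (m + n) | m ≤ (i : ℕ)} = Set.range Sum.inr := by
    rw [Equiv.image_symm_eq_preimage]
    ext (i | i) <;> simp [i.2]
  rw [Set.range_comp, ← this, ← Set.image_comp]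
  rfl

end FreeGroupBasis

namespace IsInternalFreeProduct

variable {G ι₁ ι₂ : Type*} [Group G] {G₁ G₂ : Subgroup G}

noncomputable def mulEquiv (h : IsInternalFreeProduct G₁ G₂) : G₁ ∗ G₂ ≃* G :=
  MulEquiv.ofBijective _ h

noncomputable def sumBasis (h : IsInternalFreeProduct G₁ G₂) (b₁ : FreeGroupBasis ι₁ G₁)
    (b₂ : FreeGroupBasis ι₂ G₂) : FreeGroupBasis (ι₁ ⊕ ι₂) G :=
  .ofRepr <| h.mulEquiv.symm.trans <|
    (MulEquiv.coprodCongr b₁.repr b₂.repr).trans (FreeGroup.sumMulEquivCoprod ι₁ ι₂).symm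

theorem sumBasis_comp_inl (h : IsInternalFreeProduct G₁ G₂) (b₁ : FreeGroupBasis ι₁ G₁)
    (b₂ : FreeGroupBasis ι₂ G₂) : h.sumBasis b₁ b₂ ∘ Sum.inl = fun i => (b₁ i : G) := rfl

theorem sumBasis_comp_inr (h : IsInternalFreeProduct G₁ G₂) (b₁ : FreeGroupBasis ι₁ G₁)
    (b₂ : FreeGroupBasis ι₂ G₂) : h.sumBasis b₁ b₂ ∘ Sum.inr = fun i => (b₂ i : G) := rfl

end IsInternalFreeProduct

/-- If a free group of finite rank `g` is the internal free product of subgroups `G₁` and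
`G₂`, then there are a free basis `y₁, …, y_g` of the free group and `0 ≤ g₁ ≤ g` such that
`{y₁, …, y_{g₁}}` is a free basis of `G₁` and `{y_{g₁+1}, …, y_g}` is a free basis of `G₂`. -/
theorem exists_compatible_basis_of_internalFreeProduct (g : ℕ)
    (G₁ G₂ : Subgroup (FreeGroup (Fin g))) (h : IsInternalFreeProduct G₁ G₂) :
    ∃ (y : Fin g → FreeGroup (Fin g)) (g₁ : ℕ), g₁ ≤ g ∧
      Function.Bijective (FreeGroup.lift y) ∧
      IsFreeBasisOfSubgroup (y '' {i : Fin g | (i : ℕ) < g₁}) G₁ ∧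
      IsFreeBasisOfSubgroup (y '' {i : Fin g | g₁ ≤ (i : ℕ)}) G₂ := by
  let b₁ := IsFreeGroup.basis G₁
  let b₂ := IsFreeGroup.basis G₂
  have : Finite (IsFreeGroup.Generators G₁ ⊕ IsFreeGroup.Generators G₂) :=
    .of_equiv _ (Equiv.ofFreeGroupEquiv (h.sumBasis b₁ b₂).repr)
  have : Finite (IsFreeGroup.Generators G₁) := .sum_left (IsFreeGroup.Generators G₂)
  have : Finite (IsFreeGroup.Generators G₂) := .sum_right (IsFreeGroup.Generators G₁)
  obtain ⟨n₁, ⟨e₁⟩⟩ := Finite.exists_equiv_fin (IsFreeGroup.Generators G₁)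
  obtain ⟨n₂, ⟨e₂⟩⟩ := Finite.exists_equiv_fin (IsFreeGroup.Generators G₂)
  let b := h.sumBasis (b₁.reindex e₁) (b₂.reindex e₂)
  obtain rfl : g = n₁ + n₂ :=
    Fin.equiv_iff_eq.1 ⟨(Equiv.ofFreeGroupEquiv b.repr).trans finSumFinEquiv⟩
  refine ⟨b.reindex finSumFinEquiv, n₁, Nat.le_add_right n₁ n₂, (b.reindex _).bijective_lift,
    ?_, ?_⟩
  · rw [b.image_reindex_finSumFinEquiv_lt, h.sumBasis_comp_inl]
    exact (b₁.reindex e₁).isFreeBasisOfSubgroup_range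
  · rw [b.image_reindex_finSumFinEquiv_ge, h.sumBasis_comp_inr]
    exact (b₂.reindex e₂).isFreeBasisOfSubgroup_range
end
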